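/- arXiv:2008.00459 — 2 statements merged into one kernel-verified Lean document; each statement's English description precedes it below -/
import Mathlib

section
/- Let T be the diagonal operator on c₀(ℕ) (indexed by m ≥ 1) defined by (Ty)ₘ = (1 − 1/m)·yₘ. Then for every n ∈ ℕ and every finite family x₁,…,xₙ ∈ c₀, one has ‖Σ_{k=1}^{n} T^{n−k}(I − T)x_k‖ ≤ max_{1≤k≤n} ‖x_k‖. -/
open ZeroAtInfty

/-- For the diagonal operator `T` on `c₀` (indexed by `m ≥ 1`,
here realized over `ℕ` via `m = n+1`) with `(Ty)ₘ = (1 - 1/m)yₘ`, the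
ℓ^∞-maximal regularity estimate holds:
`‖Σ_{k=1}^{n} T^{n-k}(I-T)x_k‖ ≤ max_{1≤k≤n} ‖x_k‖`. -/
theorem stmt8 (n : ℕ) (hn : 0 < n) (x : Fin n → C₀(ℕ, ℝ)) (y : C₀(ℕ, ℝ))
    (hy : ∀ m : ℕ, y m = ∑ k : Fin n,
      (1 - 1 / ((m : ℝ) + 1)) ^ (n - 1 - (k : ℕ)) * ((1 / ((m : ℝ) + 1)) * x k m))
    (M : ℝ) (hM : ∀ k : Fin n, ‖x k‖ ≤ M) :
    ‖y‖ ≤ M := by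
  have hM0 : 0 ≤ M := le_trans (norm_nonneg _) (hM ⟨0, hn⟩)
  rw [← ZeroAtInftyContinuousMap.norm_toBCF_eq_norm]
  refine BoundedContinuousFunction.norm_le hM0 |>.mpr fun m => ?_
  have hs0 : (0:ℝ) < 1 / ((m : ℝ) + 1) := by positivity
  have hs1 : (1:ℝ) / ((m : ℝ) + 1) ≤ 1 := by
    rw [div_le_one (by positivity)]; linarith [Nat.cast_nonneg (α := ℝ) m]
  set s : ℝ := 1 / ((m : ℝ) + 1) with hsdef
  set r : ℝ := 1 - s with hrdef
  have hr0 : 0 ≤ r := by simp [hrdef]; linarith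
  have hr1 : r < 1 := by simp [hrdef]; linarith
  have hxb : ∀ k : Fin n, |x k m| ≤ M := fun k => by
    calc |x k m| = ‖(x k).toBCF m‖ := rfl
    _ ≤ ‖(x k).toBCF‖ := BoundedContinuousFunction.norm_coe_le_norm _ _
    _ ≤ M := by rw [ZeroAtInftyContinuousMap.norm_toBCF_eq_norm]; exact hM k
  have h1 : ‖y.toBCF m‖ ≤ ∑ k : Fin n, r ^ (n - 1 - (k : ℕ)) * (s * M) := by
    show |y m| ≤ _
    rw [hy]
    refine (Finset.abs_sum_le_sum_abs _ _).trans (Finset.sum_le_sum fun k _ => ?_)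
    rw [abs_mul, abs_mul, abs_of_nonneg (pow_nonneg hr0 _), abs_of_nonneg hs0.le]
    gcongr
    exact hxb k
  have h2 : ∑ k : Fin n, r ^ (n - 1 - (k : ℕ)) * (s * M) = (1 - r ^ n) * M := by
    have : ∑ k : Fin n, r ^ (n - 1 - (k : ℕ)) = ∑ j ∈ Finset.range n, r ^ j := by
      rw [Fin.sum_univ_eq_sum_range (fun k => r ^ (n - 1 - k))]
      exact Finset.sum_range_reflect (fun j => r ^ j) n
    rw [← Finset.sum_mul, this]
    have hgeo : (∑ j ∈ Finset.range n, r ^ j) * (1 - r) = 1 - r ^ n := by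
      have := geom_sum_mul r n
      linarith [this]
    have hs : s = 1 - r := by simp [hrdef]
    calc (∑ j ∈ Finset.range n, r ^ j) * (s * M)
        = ((∑ j ∈ Finset.range n, r ^ j) * (1 - r)) * M := by rw [hs]; ring
      _ = (1 - r ^ n) * M := by rw [hgeo]
  calc ‖y.toBCF m‖ ≤ (1 - r ^ n) * M := h1.trans_eq h2
    _ ≤ 1 * M := by gcongr; linarith [pow_nonneg hr0 n]
    _ = M := one_mul M
end

section
/- Let X be a Banach space, S a strongly continuous semigroup on X of bounded semivariation V = var₀^τ(S) on [0,τ]. For step functions f = Σ_{i=1}^{n} cᵢ·1_{(d_{i−1}, d_i)} with values cᵢ ∈ X and partition 0 = d₀ < d₁ < … < dₙ = τ, define h(f) = Σ_{i=1}^{n} (S(τ−d_i) − S(τ−d_{i−1})) cᵢ. Then ‖h(f) − h(g)‖ ≤ V·‖f − g‖_∞ for any two step functions f, g (refining to a common partition), so h extends uniquely to a bounded linear map of norm ≤ V on the closure of the step functions in sup norm. -/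
/-- Let `S` be a strongly continuous semigroup on a Banach
space `X` of bounded semivariation `V` on `[0,τ]`. For step functions on a
common partition `0 = d₀ < … < dₙ = τ` with values `c i`, `c' i`, the map
`h(f) = Σᵢ (S(τ-dᵢ) - S(τ-d_{i-1})) cᵢ` satisfies
`‖h(f) - h(g)‖ ≤ V·‖f - g‖_∞` (the sup of `‖c i - c' i‖`). -/
theorem stmt17 {X : Type*} [NormedAddCommGroup X] [NormedSpace ℝ X]
    (S : ℝ → X →L[ℝ] X)
    (hsg : ∀ s t : ℝ, 0 ≤ s → 0 ≤ t → S (s + t) = (S s).comp (S t))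
    (h0 : S 0 = ContinuousLinearMap.id ℝ X)
    (hcont : ∀ x : X, ContinuousOn (fun t => S t x) (Set.Ici 0))
    (τ V : ℝ) (hτ : 0 < τ)
    (hV : ∀ (m : ℕ) (t : Fin (m + 1) → ℝ), StrictMono t → t 0 = 0 →
      t (Fin.last m) = τ → ∀ x : Fin m → X, (∀ i, ‖x i‖ ≤ 1) →
      ‖∑ i : Fin m, (S (t i.castSucc) - S (t i.succ)) (x i)‖ ≤ V)
    (n : ℕ) (d : Fin (n + 1) → ℝ) (hd : StrictMono d) (hd0 : d 0 = 0)
    (hdτ : d (Fin.last n) = τ) (c c' : Fin n → X) (ε : ℝ)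
    (hε : ∀ i, ‖c i - c' i‖ ≤ ε) :
    ‖(∑ i : Fin n, (S (τ - d i.succ) - S (τ - d i.castSucc)) (c i))
      - (∑ i : Fin n, (S (τ - d i.succ) - S (τ - d i.castSucc)) (c' i))‖
      ≤ V * ε := by
  -- n must be positive
  rcases Nat.eq_zero_or_pos n with hn | hn
  · exfalso
    subst hn
    rw [show (Fin.last 0) = 0 from rfl, hd0] at hdτ
    linarith
  have hne : Nonempty (Fin n) := ⟨⟨0, hn⟩⟩
  have hε0 : 0 ≤ ε := le_trans (norm_nonneg _) (hε hne.some)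
  -- V ≥ 0
  have hV0 : 0 ≤ V := by
    have := hV 1 (fun j => if j = 0 then 0 else τ) ?_ (by simp) (by simp [Fin.last]) 
      (fun _ => 0) (fun i => by simp)
    · simpa using this
    · intro a b hab
      fin_cases a <;> fin_cases b <;> simp_all <;> omega
  rcases eq_or_lt_of_le hε0 with hε0' | hεpos
  · -- ε = 0 : c = c'
    have hcc : ∀ i, c i = c' i := by
      intro i
      have := hε i
      rw [← hε0'] at this
      have := le_antisymm this (norm_nonneg _)
      rwa [norm_eq_zero, sub_eq_zero] at this
    simp [funext hcc, ← hε0']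
  · -- ε > 0
    set t : Fin (n + 1) → ℝ := fun j => τ - d j.rev with ht
    set x : Fin n → X := fun i => ε⁻¹ • (c i.rev - c' i.rev) with hx
    have key := hV n t ?_ ?_ ?_ x ?_
    · -- rewrite the sum
      have hsum : ∑ i : Fin n, (S (t i.castSucc) - S (t i.succ)) (x i)
          = ε⁻¹ • ((∑ i : Fin n, (S (τ - d i.succ) - S (τ - d i.castSucc)) (c i))
            - (∑ i : Fin n, (S (τ - d i.succ) - S (τ - d i.castSucc)) (c' i))) := by
        rw [← Finset.sum_sub_distrib, Finset.smul_sum]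
        rw [← Equiv.sum_comp (Fin.revPerm) (fun i => (S (t i.castSucc) - S (t i.succ)) (x i))]
        refine Finset.sum_congr rfl fun i _ => ?_
        simp only [Fin.revPerm_apply, hx, ht, Fin.rev_rev, Fin.rev_castSucc, Fin.rev_succ,
          map_smul, map_sub]
      rw [hsum, norm_smul, norm_inv, Real.norm_eq_abs, abs_of_pos hεpos,
        inv_mul_le_iff₀ hεpos] at key
      linarith [key, mul_comm V ε]
    · intro a b hab
      simp only [ht, sub_lt_sub_iff_left]
      exact hd (Fin.rev_lt_rev.mpr hab)
    · simp [ht, Fin.rev_zero, hdτ]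
    · simp [ht, Fin.rev_last, hd0]
    · intro i
      simp only [hx, norm_smul, norm_inv, Real.norm_eq_abs, abs_of_pos hεpos]
      rw [inv_mul_le_iff₀ hεpos]
      have := hε i.rev
      linarith
end
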